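/- arXiv:1911.11389 — 8 statements merged into one kernel-verified Lean document; each statement's English description precedes it below -/
import Mathlib

section
/- Let X be a compact metric space, let T : X → X be a nonexpansive operator, and let ε > 0. Then there exists δ > 0 such that for each x ∈ X satisfying ρ(x, T(x)) ≤ δ one has d(x, Fix(T)) ≤ ε. -/
/-! A continuous function on a compact space that is positive off an open set `U` is bounded
below off `U` by a positive constant. Applied to `x ↦ dist x (T x)`, which is continuous because
`T` is `1`-Lipschitz and vanishes exactly on `Fix T`, with `U` the open `ε`-neighbourhood of
`Fix T`, this constant is the required `δ` (up to a factor `1/2`). -/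

open Metric

theorem Continuous.exists_pos_sublevel_subset {X : Type*} [TopologicalSpace X] [CompactSpace X]
    {f : X → ℝ} (hf : Continuous f) {U : Set X} (hU : IsOpen U) (hzero : {x | f x ≤ 0} ⊆ U) :
    ∃ δ > 0, {x | f x ≤ δ} ⊆ U := by
  have hpos : ∀ x ∈ Uᶜ, 0 < f x := fun x hx => not_le.mp fun h => hx (hzero h)
  obtain ⟨m, hm, hmin⟩ :=
    hU.isClosed_compl.isCompact.exists_forall_le' hf.continuousOn hpos
  refine ⟨m / 2, half_pos hm, fun x hx => ?_⟩
  by_contra hxU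
  have hle : f x ≤ m / 2 := hx
  linarith [hmin x hxU]

/-- Let `X` be a compact metric space, `T : X → X` nonexpansive, and `ε > 0`.
Then there exists `δ > 0` such that every `x ∈ X` with `dist x (T x) ≤ δ`
satisfies `d(x, Fix(T)) ≤ ε`. -/
theorem approx_fixed_point_near_fixed_point_set
    {X : Type*} [MetricSpace X] [CompactSpace X] (T : X → X)
    (hT : ∀ x y : X, dist (T x) (T y) ≤ dist x y)
    (ε : ℝ) (hε : 0 < ε) :
    ∃ δ > 0, ∀ x : X, dist x (T x) ≤ δ →
      Metric.infDist x {y : X | T y = y} ≤ ε := by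
  have hTcont : Continuous T :=
    (LipschitzWith.of_dist_le_mul (K := 1) fun x y => by simpa using hT x y).continuous
  have hnear : {x | dist x (T x) ≤ 0} ⊆ {x | infDist x {y | T y = y} < ε} := by
    intro x hx
    have hfix : T x = x := (dist_le_zero.mp hx).symm
    simpa [infDist_zero_of_mem (show x ∈ {y | T y = y} from hfix)] using hε
  obtain ⟨δ, hδ, hsub⟩ := (continuous_id.dist hTcont).exists_pos_sublevel_subset
    (isOpen_lt (continuous_infDist_pt _) continuous_const) hnear
  exact ⟨δ, hδ, fun x hx => (hsub hx).le⟩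
end

section
/- Let X be a compact metric space and let T : X → X be a nonexpansive operator such that lim_{j→∞} Tʲ(y⁰) exists for every y⁰ ∈ X. Let μ > 0. Then there exists a positive integer k₁ such that for every x ∈ X there exists j ∈ {0,1,…,k₁} with d(Tʲ(x), Fix(T)) ≤ μ. -/
/-!
Every orbit converges to a limit, which is a fixed point because `T` is continuous; so each
`x` has some iterate within distance `< μ` of `Fix(T)`. The sets of points whose `n`-th
iterate is that close are open, and compactness lets finitely many of them cover `X`.
-/

open Filter Function Topology

theorem CompactSpace.exists_bound_of_forall_exists_mem_isOpen {X : Type*} [TopologicalSpace X]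
    [CompactSpace X] {U : ℕ → Set X} (hU : ∀ n, IsOpen (U n)) (hcover : ∀ x, ∃ n, x ∈ U n) :
    ∃ N, ∀ x, ∃ n ≤ N, x ∈ U n := by
  obtain ⟨s, hs⟩ := isCompact_univ.elim_finite_subcover U hU
    (fun x _ => Set.mem_iUnion.mpr (hcover x))
  refine ⟨s.sup id, fun x => ?_⟩
  obtain ⟨n, hns, hxn⟩ := Set.mem_iUnion₂.mp (hs (Set.mem_univ x))
  exact ⟨n, Finset.le_sup (f := id) hns, hxn⟩

theorem exists_iterate_infDist_fixedPoints_lt {X : Type*} [MetricSpace X] {T : X → X}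
    (hT : Continuous T) {x z : X} (hz : Tendsto (fun j => T^[j] x) atTop (𝓝 z))
    {μ : ℝ} (hμ : 0 < μ) : ∃ j, Metric.infDist (T^[j] x) (fixedPoints T) < μ := by
  have hzFix : z ∈ fixedPoints T := isFixedPt_of_tendsto_iterate hz hT.continuousAt
  obtain ⟨j, hj⟩ := (Metric.tendsto_nhds.mp hz μ hμ).exists
  exact ⟨j, (Metric.infDist_le_dist_of_mem hzFix).trans_lt hj⟩

/-- Let `X` be a compact metric space and `T : X → X` a nonexpansive operator whose
iterates converge pointwise. For every `μ > 0` there is a positive integer `k₁` such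
that for every `x ∈ X` there is `j ∈ {0,…,k₁}` with `d(T^[j] x, Fix(T)) ≤ μ`. -/
theorem exists_iterate_near_fixed_point_set
    {X : Type*} [MetricSpace X] [CompactSpace X] (T : X → X)
    (hT : ∀ x y : X, dist (T x) (T y) ≤ dist x y)
    (hconv : ∀ y₀ : X, ∃ z : X,
      Filter.Tendsto (fun j : ℕ => T^[j] y₀) Filter.atTop (nhds z))
    (μ : ℝ) (hμ : 0 < μ) :
    ∃ k₁ : ℕ, 0 < k₁ ∧ ∀ x : X, ∃ j ≤ k₁,
      Metric.infDist (T^[j] x) {y : X | T y = y} ≤ μ := by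
  have hTcont : Continuous T :=
    (LipschitzWith.of_dist_le_mul (K := 1) fun x y => by simpa using hT x y).continuous
  have hopen : ∀ n, IsOpen {x | Metric.infDist (T^[n] x) (fixedPoints T) < μ} := fun n =>
    isOpen_lt ((Metric.continuous_infDist_pt _).comp (hTcont.iterate n)) continuous_const
  have hcover : ∀ x, ∃ n, Metric.infDist (T^[n] x) (fixedPoints T) < μ := fun x =>
    let ⟨_, hz⟩ := hconv x
    exists_iterate_infDist_fixedPoints_lt hTcont hz hμ
  obtain ⟨N, hN⟩ := CompactSpace.exists_bound_of_forall_exists_mem_isOpen hopen hcover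
  refine ⟨N + 1, N.succ_pos, fun x => ?_⟩
  obtain ⟨n, hnN, hn⟩ := hN x
  exact ⟨n, hnN.trans N.le_succ, hn.le⟩
end

section
/- Let X be a compact metric space and let T : X → X be a nonexpansive operator such that lim_{j→∞} Tʲ(y⁰) exists for every y⁰ ∈ X. Let ε > 0. Then there exists a natural number k₀ such that for each x ∈ X and each integer k ≥ k₀, ρ(Tᵏ(x), lim_{i→∞} Tⁱ(x)) ≤ ε. In other words, the powers Tᵏ converge uniformly on X to their pointwise limits. -/
/-! Iterates of a nonexpansive map are `1`-Lipschitz, hence form an equicontinuous family, and on a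
compact space pointwise convergence of an equicontinuous family is uniform (Arzelà–Ascoli). -/

open Filter Topology

theorem Equicontinuous.tendstoUniformly_of_tendsto {ι X α : Type*} [TopologicalSpace X]
    [CompactSpace X] [UniformSpace α] {F : ι → X → α} (hF : Equicontinuous F) {l : Filter ι}
    {f : X → α} (h : ∀ x, Tendsto (fun i => F i x) l (𝓝 (f x))) : TendstoUniformly F f l :=
  UniformFun.tendsto_iff_tendstoUniformly.1
    ((hF.tendsto_uniformFun_iff_pi l f).2 (tendsto_pi_nhds.2 h))

theorem LipschitzWith.uniformEquicontinuous_iterate {X : Type*} [PseudoEMetricSpace X] {T : X → X}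
    (hT : LipschitzWith 1 T) : UniformEquicontinuous fun n : ℕ => T^[n] :=
  LipschitzWith.uniformEquicontinuous _ 1 fun n => by simpa using hT.iterate n

/-- Let `X` be a compact metric space and `T : X → X` a nonexpansive operator whose
iterates converge pointwise. For every `ε > 0` there is `k₀ ∈ ℕ` such that for each
`x ∈ X` and each `k ≥ k₀`, `dist (T^[k] x) (lim_{i→∞} T^[i] x) ≤ ε`: the powers of `T`
converge uniformly on `X` to their pointwise limits. -/
theorem iterates_uniformly_close_to_limit
    {X : Type*} [MetricSpace X] [CompactSpace X] (T : X → X)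
    (hT : ∀ x y : X, dist (T x) (T y) ≤ dist x y)
    (hconv : ∀ y₀ : X, ∃ z : X,
      Filter.Tendsto (fun j : ℕ => T^[j] y₀) Filter.atTop (nhds z))
    (ε : ℝ) (hε : 0 < ε) :
    ∃ k₀ : ℕ, ∀ x z : X,
      Filter.Tendsto (fun i : ℕ => T^[i] x) Filter.atTop (nhds z) →
      ∀ k ≥ k₀, dist (T^[k] x) z ≤ ε := by
  choose g hg using hconv
  have hLip : LipschitzWith 1 T := .of_dist_le_mul fun x y => by simpa using hT x y
  have hunif : TendstoUniformly (fun k => T^[k]) g atTop :=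
    hLip.uniformEquicontinuous_iterate.equicontinuous.tendstoUniformly_of_tendsto hg
  obtain ⟨k₀, hk₀⟩ := eventually_atTop.1 (Metric.tendstoUniformly_iff.1 hunif ε hε)
  refine ⟨k₀, fun x z hx k hk => ?_⟩
  rw [tendsto_nhds_unique hx (hg x), dist_comm]
  exact (hk₀ k hk x).le
end

section
/- Let X be a compact metric space, let T : X → X be a nonexpansive operator such that lim_{j→∞} Tʲ(y⁰) exists for every y⁰ ∈ X, and let ε > 0. Then there exist a positive integer k₀ and a δ > 0 such that for each finite sequence x⁰, x¹, …, x^{k₀} in X satisfying ρ(x^{i+1}, T(xⁱ)) ≤ δ for all i = 0,1,…,k₀−1, the inequality d(x^{k₀}, Fix(T)) ≤ ε holds. -/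
/-!
For a nonexpansive `T`, the distance `infDist (T^[n] w) (Fix T)` is antitone in `n`, continuous
in `w`, and tends to `0` because each orbit converges to a fixed point. By Dini's theorem on the
compact space it tends to `0` uniformly, so some `k₀` brings every exact orbit within `ε / 2`
of `Fix T`. An inexact orbit with errors `δ = ε / (2 k₀)` stays within `k₀ δ = ε / 2` of the
exact orbit of its starting point, since `T` does not amplify earlier errors.
-/

open Filter Topology Function Metric

namespace LipschitzWith

variable {X : Type*} {T : X → X}

theorem infDist_fixedPoints_apply_le [PseudoMetricSpace X] (hT : LipschitzWith 1 T) (w : X) :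
    infDist (T w) (fixedPoints T) ≤ infDist w (fixedPoints T) := by
  rcases (fixedPoints T).eq_empty_or_nonempty with hempty | hne
  · simp [hempty]
  refine le_of_forall_gt fun r hr => ?_
  obtain ⟨p, hp, hwp⟩ := (infDist_lt_iff hne).1 hr
  calc infDist (T w) (fixedPoints T) ≤ dist (T w) (T p) := by
        rw [hp.eq]; exact infDist_le_dist_of_mem hp
    _ ≤ dist w p := by simpa using hT.dist_le_mul w p
    _ < r := hwp

theorem antitone_infDist_fixedPoints_iterate [PseudoMetricSpace X] (hT : LipschitzWith 1 T)
    (w : X) : Antitone fun n => infDist (T^[n] w) (fixedPoints T) :=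
  antitone_nat_of_succ_le fun n => by
    simpa only [iterate_succ_apply'] using hT.infDist_fixedPoints_apply_le (T^[n] w)

theorem tendstoUniformly_infDist_fixedPoints_iterate [MetricSpace X] [CompactSpace X]
    (hT : LipschitzWith 1 T) (hconv : ∀ y, ∃ z, Tendsto (fun n => T^[n] y) atTop (𝓝 z)) :
    TendstoUniformly (fun n w => infDist (T^[n] w) (fixedPoints T)) 0 atTop := by
  refine Antitone.tendstoUniformly_of_forall_tendsto
    (fun n => (continuous_infDist_pt _).comp (hT.continuous.iterate n))
    (fun m n hmn w => hT.antitone_infDist_fixedPoints_iterate w hmn) continuous_const fun y => ?_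
  obtain ⟨z, hz⟩ := hconv y
  have hfix : z ∈ fixedPoints T := isFixedPt_of_tendsto_iterate hz hT.continuous.continuousAt
  have h := ((continuous_infDist_pt (fixedPoints T)).tendsto z).comp hz
  rwa [infDist_zero_of_mem hfix] at h

theorem dist_iterate_le_mul_of_dist_le [PseudoMetricSpace X] (hT : LipschitzWith 1 T)
    {x : ℕ → X} {δ : ℝ} {n : ℕ} (hx : ∀ i < n, dist (x (i + 1)) (T (x i)) ≤ δ) :
    dist (x n) (T^[n] (x 0)) ≤ n * δ := by
  induction n with
  | zero => simp
  | succ n ih =>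
    calc dist (x (n + 1)) (T^[n + 1] (x 0))
        ≤ dist (x (n + 1)) (T (x n)) + dist (T (x n)) (T (T^[n] (x 0))) := by
          rw [iterate_succ_apply']; exact dist_triangle _ _ _
      _ ≤ δ + n * δ := by
          gcongr
          · exact hx n n.lt_succ_self
          · have hstep : dist (T (x n)) (T (T^[n] (x 0))) ≤ dist (x n) (T^[n] (x 0)) := by
              simpa using hT.dist_le_mul (x n) (T^[n] (x 0))
            exact hstep.trans (ih fun i hi => hx i (hi.trans n.lt_succ_self))
      _ = (n + 1 : ℕ) * δ := by push_cast; ring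

end LipschitzWith

/-- Let `X` be a compact metric space and `T : X → X` a nonexpansive operator whose
iterates converge pointwise, and let `ε > 0`. Then there exist a positive integer `k₀`
and `δ > 0` such that every finite sequence `x⁰,…,x^{k₀}` in `X` with
`dist (x^{i+1}) (T xⁱ) ≤ δ` for `i = 0,…,k₀−1` satisfies `d(x^{k₀}, Fix(T)) ≤ ε`. -/
theorem inexact_orbit_finite_near_fixed_point_set
    {X : Type*} [MetricSpace X] [CompactSpace X] (T : X → X)
    (hT : ∀ x y : X, dist (T x) (T y) ≤ dist x y)
    (hconv : ∀ y₀ : X, ∃ z : X,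
      Filter.Tendsto (fun j : ℕ => T^[j] y₀) Filter.atTop (nhds z))
    (ε : ℝ) (hε : 0 < ε) :
    ∃ k₀ : ℕ, 0 < k₀ ∧ ∃ δ > 0, ∀ x : ℕ → X,
      (∀ i < k₀, dist (x (i + 1)) (T (x i)) ≤ δ) →
      Metric.infDist (x k₀) {y : X | T y = y} ≤ ε := by
  have hT' : LipschitzWith 1 T := .of_dist_le_mul (by simpa using hT)
  obtain ⟨k₀, hunif, hk₀⟩ := ((tendstoUniformly_iff.1
    (hT'.tendstoUniformly_infDist_fixedPoints_iterate hconv) (ε / 2) (half_pos hε)).and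
    (eventually_gt_atTop 0)).exists
  refine ⟨k₀, hk₀, ε / (2 * k₀), by positivity, fun x hx => ?_⟩
  have hclose : infDist (T^[k₀] (x 0)) (fixedPoints T) < ε / 2 := by
    simpa [abs_of_nonneg infDist_nonneg] using hunif (x 0)
  calc infDist (x k₀) (fixedPoints T)
      ≤ infDist (T^[k₀] (x 0)) (fixedPoints T) + dist (x k₀) (T^[k₀] (x 0)) :=
        infDist_le_infDist_add_dist
    _ ≤ ε / 2 + k₀ * (ε / (2 * k₀)) :=
        add_le_add hclose.le (hT'.dist_iterate_le_mul_of_dist_le hx)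
    _ = ε := by field_simp; ring
end

section
/- Let X be a compact metric space, let T : X → X be a nonexpansive operator such that lim_{j→∞} Tʲ(y⁰) exists for every y⁰ ∈ X, and let ε > 0. Then there exist a positive integer k₀ and a δ > 0 such that for each infinite sequence {xⁱ}_{i=0}^∞ ⊂ X satisfying ρ(x^{i+1}, T(xⁱ)) ≤ δ for all i = 0,1,…, the inequality d(xⁱ, Fix(T)) ≤ ε holds for all integers i ≥ k₀. -/
/-!
For a nonexpansive `T`, the functions `w ↦ d(Tⁿ w, Fix T)` are continuous and nonincreasing in `n`,
and they tend to `0` pointwise because every orbit converges to a fixed point. On a compact space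
Dini's theorem makes this convergence uniform, so some `k₀` brings every point within `ε / 2` of
`Fix T`. An inexact orbit with errors `δ` stays within `k₀ δ` of the exact orbit for `k₀` steps,
and `δ = ε / (2 k₀)` gives the bound.
-/

open Function Metric Filter Topology

namespace LipschitzWith

variable {X : Type*} [PseudoMetricSpace X] {T : X → X}

theorem infDist_apply_fixedPoints_le (hT : LipschitzWith 1 T) (w : X) :
    infDist (T w) (fixedPoints T) ≤ infDist w (fixedPoints T) := by
  rcases (fixedPoints T).eq_empty_or_nonempty with hF | hF
  · simp [hF]
  refine (le_infDist hF).2 fun p hp => ?_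
  calc infDist (T w) (fixedPoints T) ≤ dist (T w) (T p) := by
        rw [show T p = p from hp]; exact infDist_le_dist_of_mem hp
    _ ≤ dist w p := by simpa using hT.dist_le_mul w p

theorem antitone_infDist_iterate_fixedPoints (hT : LipschitzWith 1 T) :
    Antitone fun n w => infDist (T^[n] w) (fixedPoints T) := by
  refine fun _ _ hmn w => antitone_nat_of_succ_le (f := fun n => infDist (T^[n] w) _)
    (fun n => ?_) hmn
  rw [iterate_succ_apply']
  exact hT.infDist_apply_fixedPoints_le _

theorem dist_iterate_le_mul_of_forall_dist_succ_le (hT : LipschitzWith 1 T) {δ : ℝ}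
    {x : ℕ → X} (hx : ∀ i, dist (x (i + 1)) (T (x i)) ≤ δ) (n : ℕ) :
    dist (x n) (T^[n] (x 0)) ≤ n * δ := by
  induction n with
  | zero => simp
  | succ n ih =>
    have hstep : dist (T (x n)) (T (T^[n] (x 0))) ≤ dist (x n) (T^[n] (x 0)) := by
      simpa using hT.dist_le_mul (x n) (T^[n] (x 0))
    calc dist (x (n + 1)) (T^[n + 1] (x 0))
        ≤ dist (x (n + 1)) (T (x n)) + dist (T (x n)) (T (T^[n] (x 0))) := by
          rw [iterate_succ_apply']; exact dist_triangle _ _ _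
      _ ≤ δ + n * δ := add_le_add (hx n) (hstep.trans ih)
      _ = (n + 1 : ℕ) * δ := by push_cast; ring

end LipschitzWith

theorem tendsto_infDist_iterate_fixedPoints {X : Type*} [MetricSpace X] {T : X → X}
    (hT : Continuous T) {w z : X} (hz : Tendsto (fun n => T^[n] w) atTop (𝓝 z)) :
    Tendsto (fun n => infDist (T^[n] w) (fixedPoints T)) atTop (𝓝 0) := by
  have hfix : z ∈ fixedPoints T := isFixedPt_of_tendsto_iterate hz hT.continuousAt
  have hlim := ((continuous_infDist_pt (fixedPoints T)).tendsto z).comp hz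
  rwa [infDist_zero_of_mem hfix] at hlim

theorem LipschitzWith.tendstoUniformly_infDist_iterate_fixedPoints {X : Type*}
    [MetricSpace X] [CompactSpace X] {T : X → X} (hT : LipschitzWith 1 T)
    (hconv : ∀ w : X, ∃ z, Tendsto (fun n => T^[n] w) atTop (𝓝 z)) :
    TendstoUniformly (fun n w => infDist (T^[n] w) (fixedPoints T)) 0 atTop :=
  Antitone.tendstoUniformly_of_forall_tendsto
    (fun n => (continuous_infDist_pt _).comp (hT.iterate n).continuous)
    hT.antitone_infDist_iterate_fixedPoints continuous_const
    fun w => (hconv w).elim fun _ hz => tendsto_infDist_iterate_fixedPoints hT.continuous hz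

/-- Let `X` be a compact metric space and `T : X → X` a nonexpansive operator whose
iterates converge pointwise, and let `ε > 0`. Then there exist a positive integer `k₀`
and `δ > 0` such that every infinite sequence `{xⁱ}` in `X` with
`dist (x^{i+1}) (T xⁱ) ≤ δ` for all `i` satisfies `d(xⁱ, Fix(T)) ≤ ε` for all `i ≥ k₀`. -/
theorem inexact_orbit_near_fixed_point_set
    {X : Type*} [MetricSpace X] [CompactSpace X] (T : X → X)
    (hT : ∀ x y : X, dist (T x) (T y) ≤ dist x y)
    (hconv : ∀ y₀ : X, ∃ z : X,
      Filter.Tendsto (fun j : ℕ => T^[j] y₀) Filter.atTop (nhds z))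
    (ε : ℝ) (hε : 0 < ε) :
    ∃ k₀ : ℕ, 0 < k₀ ∧ ∃ δ > 0, ∀ x : ℕ → X,
      (∀ i : ℕ, dist (x (i + 1)) (T (x i)) ≤ δ) →
      ∀ i ≥ k₀, Metric.infDist (x i) {y : X | T y = y} ≤ ε := by
  have hT₁ : LipschitzWith 1 T := .mk_one hT
  obtain ⟨k₀, hnear, hk₀⟩ :=
    ((tendstoUniformly_iff.1 (hT₁.tendstoUniformly_infDist_iterate_fixedPoints hconv) (ε / 2)
      (half_pos hε)).and (eventually_gt_atTop 0)).exists
  have hk₀' : (0 : ℝ) < k₀ := by exact_mod_cast hk₀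
  refine ⟨k₀, hk₀, ε / (2 * k₀), by positivity, fun x hx i hi => ?_⟩
  obtain ⟨s, rfl⟩ := Nat.exists_eq_add_of_le' hi
  have hshadow := hT₁.dist_iterate_le_mul_of_forall_dist_succ_le (x := fun j => x (s + j))
    (fun j => hx (s + j)) k₀
  rw [add_zero] at hshadow
  have hstart := hnear (x s)
  simp only [Pi.zero_apply, dist_zero_left, Real.norm_of_nonneg infDist_nonneg] at hstart
  change infDist (x (s + k₀)) (fixedPoints T) ≤ ε
  calc infDist (x (s + k₀)) (fixedPoints T)
      ≤ infDist (T^[k₀] (x s)) (fixedPoints T) + dist (x (s + k₀)) (T^[k₀] (x s)) :=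
        infDist_le_infDist_add_dist
    _ ≤ ε / 2 + k₀ * (ε / (2 * k₀)) := add_le_add hstart.le hshadow
    _ = ε := by field_simp; ring
end

section
/- Let X be a compact metric space, let T : X → X be a nonexpansive operator such that lim_{j→∞} Tʲ(y⁰) exists for every y⁰ ∈ X, and let ε > 0. Let {μ_k}_{k=1}^∞ be a sequence of positive reals with lim_{k→∞} μ_k = 0. Then there exists a positive integer k₁ such that for each sequence {xⁱ}_{i=0}^∞ ⊂ X satisfying ρ(x^{i+1}, T(xⁱ)) ≤ μ_{i+1} for all i = 0,1,…, the inequality d(xᵏ, Fix(T)) ≤ ε holds for all integers k ≥ k₁. -/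
/-- Let `X` be a compact metric space and `T : X → X` a nonexpansive operator whose
iterates converge pointwise, let `ε > 0`, and let `{μ_k}` be positive reals tending
to `0`. Then there is a positive integer `k₁` such that every sequence `{xⁱ}` in `X`
with `dist (x^{i+1}) (T xⁱ) ≤ μ_{i+1}` for all `i` satisfies
`d(xᵏ, Fix(T)) ≤ ε` for all `k ≥ k₁`. -/
theorem inexact_orbit_vanishing_errors_near_fixed_point_set
    {X : Type*} [MetricSpace X] [CompactSpace X] (T : X → X)
    (hT : ∀ x y : X, dist (T x) (T y) ≤ dist x y)
    (hconv : ∀ y₀ : X, ∃ z : X,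
      Filter.Tendsto (fun j : ℕ => T^[j] y₀) Filter.atTop (nhds z))
    (ε : ℝ) (hε : 0 < ε)
    (μ : ℕ → ℝ) (hμpos : ∀ k : ℕ, 0 < μ k)
    (hμ0 : Filter.Tendsto μ Filter.atTop (nhds 0)) :
    ∃ k₁ : ℕ, 0 < k₁ ∧ ∀ x : ℕ → X,
      (∀ i : ℕ, dist (x (i + 1)) (T (x i)) ≤ μ (i + 1)) →
      ∀ k ≥ k₁, Metric.infDist (x k) {y : X | T y = y} ≤ ε := by
  by_cases hXe : Nonempty X
  case neg =>
    exact ⟨1, one_pos, fun x _ k _ => absurd ⟨x k⟩ hXe⟩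
  set F : Set X := {y : X | T y = y} with hF
  -- T is continuous
  have hTc : Continuous T := by
    refine (LipschitzWith.of_dist_le_mul (K := 1) ?_).continuous
    intro x y; simpa using hT x y
  -- iterates are nonexpansive
  have hiter : ∀ (n : ℕ) (a b : X), dist (T^[n] a) (T^[n] b) ≤ dist a b := by
    intro n
    induction n with
    | zero => intro a b; simp
    | succ n ih =>
      intro a b
      rw [Function.iterate_succ_apply', Function.iterate_succ_apply']
      exact (hT _ _).trans (ih a b)
  -- limits of iterates are fixed points
  have hfix : ∀ y₀ z : X,
      Filter.Tendsto (fun j : ℕ => T^[j] y₀) Filter.atTop (nhds z) → z ∈ F := by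
    intro y₀ z hz
    have h1 : Filter.Tendsto (fun j : ℕ => T (T^[j] y₀)) Filter.atTop (nhds (T z)) :=
      (hTc.tendsto z).comp hz
    have h2 : Filter.Tendsto (fun j : ℕ => T^[j + 1] y₀) Filter.atTop (nhds z) :=
      hz.comp (Filter.tendsto_add_atTop_nat 1)
    have h3 : Filter.Tendsto (fun j : ℕ => T (T^[j] y₀)) Filter.atTop (nhds z) := by
      simpa [Function.iterate_succ_apply'] using h2
    show T z = z
    exact tendsto_nhds_unique h1 h3
  obtain ⟨y₀⟩ := hXe
  obtain ⟨z₀, hz₀⟩ := hconv y₀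
  have hFne : F.Nonempty := ⟨z₀, hfix y₀ z₀ hz₀⟩
  have hFcl : IsClosed F := isClosed_eq hTc continuous_id
  -- infDist to F is nonincreasing along T
  have hmono : ∀ x : X, Metric.infDist (T x) F ≤ Metric.infDist x F := by
    intro x
    obtain ⟨f, hfF, hfd⟩ := (hFcl.isCompact).exists_infDist_eq_dist hFne x
    rw [hfd]
    calc Metric.infDist (T x) F ≤ dist (T x) (T f) := by
          have hfF' : T f = f := hfF
          have : T f ∈ F := by show T (T f) = T f; rw [hfF']; exact hfF'
          exact Metric.infDist_le_dist_of_mem this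
      _ ≤ dist x f := hT x f
  have hmono' : ∀ (m : ℕ) (x : X), Metric.infDist (T^[m] x) F ≤ Metric.infDist x F := by
    intro m
    induction m with
    | zero => intro x; simp
    | succ m ih =>
      intro x
      rw [Function.iterate_succ_apply']
      exact (hmono _).trans (ih x)
  -- for every y there is n with infDist (T^[n] y) F ≤ ε/4
  have hptwise : ∀ y : X, ∃ n : ℕ, Metric.infDist (T^[n] y) F ≤ ε / 4 := by
    intro y
    obtain ⟨z, hz⟩ := hconv y
    have hzF : z ∈ F := hfix y z hz
    have htend : Filter.Tendsto (fun j : ℕ => Metric.infDist (T^[j] y) F)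
        Filter.atTop (nhds (Metric.infDist z F)) :=
      ((Metric.continuous_infDist_pt F).tendsto z).comp hz
    have hz0 : Metric.infDist z F = 0 := by
      rw [← Metric.infDist_zero_of_mem hzF]
    rw [hz0] at htend
    have : ∀ᶠ j in Filter.atTop, Metric.infDist (T^[j] y) F < ε / 4 :=
      htend.eventually (gt_mem_nhds (by linarith))
    obtain ⟨n, hn⟩ := this.exists
    exact ⟨n, hn.le⟩
  choose Nf hNf using hptwise
  -- finite subcover by ε/4-balls
  have hcov : (Set.univ : Set X) ⊆ ⋃ y : X, Metric.ball y (ε / 4) := by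
    intro y _
    exact Set.mem_iUnion.mpr ⟨y, Metric.mem_ball_self (by linarith)⟩
  obtain ⟨t, ht⟩ := isCompact_univ.elim_finite_subcover
    (fun y : X => Metric.ball y (ε / 4)) (fun y => Metric.isOpen_ball) hcov
  set N : ℕ := t.sup Nf with hN
  -- uniform bound: for all y, infDist (T^[N] y) F ≤ ε/2
  have hunif : ∀ y : X, Metric.infDist (T^[N] y) F ≤ ε / 2 := by
    intro y
    obtain ⟨c, hc⟩ := Set.mem_iUnion₂.mp (ht (Set.mem_univ y))
    obtain ⟨hct, hyc⟩ := hc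
    have h1 : Metric.infDist (T^[N] c) F ≤ ε / 4 := by
      have hle : Nf c ≤ N := Finset.le_sup hct
      calc Metric.infDist (T^[N] c) F
          = Metric.infDist (T^[N - Nf c] (T^[Nf c] c)) F := by
            rw [← Function.iterate_add_apply, Nat.sub_add_cancel hle]
        _ ≤ Metric.infDist (T^[Nf c] c) F := hmono' _ _
        _ ≤ ε / 4 := hNf c
    calc Metric.infDist (T^[N] y) F
        ≤ Metric.infDist (T^[N] c) F + dist (T^[N] y) (T^[N] c) :=
          Metric.infDist_le_infDist_add_dist
      _ ≤ ε / 4 + dist y c := add_le_add h1 (hiter N y c)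
      _ ≤ ε / 4 + ε / 4 := by
          have := Metric.mem_ball.mp hyc
          linarith
      _ = ε / 2 := by ring
  -- choose k₀ with μ k ≤ ε / (2 * (N + 1)) for k ≥ k₀
  have hδ : (0:ℝ) < ε / (2 * (N + 1)) := by positivity
  have hev : ∀ᶠ k in Filter.atTop, μ k < ε / (2 * (N + 1)) :=
    hμ0.eventually (gt_mem_nhds hδ)
  obtain ⟨k₀, hk₀⟩ := Filter.eventually_atTop.mp hev
  refine ⟨k₀ + N + 1, Nat.succ_pos _, fun x hx k hk => ?_⟩
  -- error accumulation
  have hacc : ∀ (i m : ℕ), dist (x (i + m)) (T^[m] (x i)) ≤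
      ∑ j ∈ Finset.range m, μ (i + j + 1) := by
    intro i m
    induction m with
    | zero => simp
    | succ m ih =>
      rw [Finset.sum_range_succ]
      calc dist (x (i + (m + 1))) (T^[m + 1] (x i))
          ≤ dist (x (i + m + 1)) (T (x (i + m)))
            + dist (T (x (i + m))) (T (T^[m] (x i))) := by
              rw [Function.iterate_succ_apply', show i + (m+1) = i + m + 1 from rfl]
              exact dist_triangle _ _ _
        _ ≤ μ (i + m + 1) + dist (x (i + m)) (T^[m] (x i)) :=
            add_le_add (hx (i + m)) (hT _ _)
        _ ≤ μ (i + m + 1) + ∑ j ∈ Finset.range m, μ (i + j + 1) := by linarith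
        _ = ∑ j ∈ Finset.range m, μ (i + j + 1) + μ (i + m + 1) := by ring
  -- main estimate
  set i : ℕ := k - N with hi
  have hkN : N ≤ k := by omega
  have hik : i + N = k := by omega
  have hik₀ : k₀ + 1 ≤ i := by omega
  have hsum : ∑ j ∈ Finset.range N, μ (i + j + 1) ≤ ε / 2 := by
    have hterm : ∀ j ∈ Finset.range N, μ (i + j + 1) ≤ ε / (2 * (N + 1)) := by
      intro j _
      exact (hk₀ _ (by omega)).le
    calc ∑ j ∈ Finset.range N, μ (i + j + 1)
        ≤ ∑ _j ∈ Finset.range N, ε / (2 * (N + 1)) := Finset.sum_le_sum hterm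
      _ = N * (ε / (2 * (N + 1))) := by rw [Finset.sum_const]; simp [mul_comm]
      _ ≤ ε / 2 := by
          have h1 : (N:ℝ) * (ε / (2 * (N + 1))) = ε / 2 * ((N:ℝ) / ((N:ℝ) + 1)) := by
            field_simp
          have h2 : (N:ℝ) / ((N:ℝ) + 1) ≤ 1 := by
            rw [div_le_one (by positivity)]; linarith
          rw [h1]
          nlinarith
  calc Metric.infDist (x k) F
      ≤ Metric.infDist (T^[N] (x i)) F + dist (x k) (T^[N] (x i)) :=
        Metric.infDist_le_infDist_add_dist
    _ ≤ ε / 2 + ∑ j ∈ Finset.range N, μ (i + j + 1) := by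
        have := hacc i N
        rw [hik] at this
        exact add_le_add (hunif (x i)) this
    _ ≤ ε / 2 + ε / 2 := add_le_add_right hsum _
    _ = ε := by ring
end

section
/- Let H be a real Hilbert space, let f : H → ℝ be a convex function, let x̄, x ∈ H, let Δ > 0 and L̄ > 0, and suppose f is L̄-Lipschitz on the closed ball B(x̄, Δ/(4L̄)) centered at x̄ of radius Δ/(4L̄). Assume f(x) > f(x̄) + Δ and let v be a subgradient of f at x. Then v ≠ 0 and ⟨v/‖v‖, x̄ − x⟩ < −Δ/(4L̄). -/
open scoped InnerProductSpace

/-! A subgradient inequality at `x` bounds `⟪v, z - x⟫` by `f z - f x`, which the Lipschitz bound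
makes `< -3Δ/4` on the whole ball `B(xb, r)`, `r = Δ/(4L̄)`. Maximizing `⟪v, z - x⟫` over the ball
gives `⟪v, xb - x⟫ + r‖v‖ < 0`, which forces `v ≠ 0` and, after dividing by `‖v‖`, the claim. -/

section InnerProduct

variable {H : Type*} [NormedAddCommGroup H] [InnerProductSpace ℝ H]

theorem exists_mem_closedBall_inner_eq {r : ℝ} (hr : 0 ≤ r) (c v : H) :
    ∃ z ∈ Metric.closedBall c r, ⟪v, z⟫_ℝ = ⟪v, c⟫_ℝ + r * ‖v‖ := by
  refine ⟨c + r • ‖v‖⁻¹ • v, ?_, ?_⟩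
  · rw [mem_closedBall_iff_norm, add_sub_cancel_left, norm_smul, norm_smul, norm_inv, norm_norm,
      Real.norm_of_nonneg hr, inv_mul_eq_div]
    exact mul_le_of_le_one_right hr (div_self_le_one _)
  · rw [inner_add_right, real_inner_smul_right, real_inner_smul_right, real_inner_self_eq_norm_sq]
    rcases eq_or_ne v 0 with rfl | hv
    · simp
    · field_simp [norm_ne_zero_iff.mpr hv]

theorem ne_zero_and_inner_normalize_lt {v y : H} {r : ℝ} (h : ⟪v, y⟫_ℝ + r * ‖v‖ < 0) :
    v ≠ 0 ∧ ⟪‖v‖⁻¹ • v, y⟫_ℝ < -r := by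
  have hv : v ≠ 0 := by
    rintro rfl
    simp at h
  have hnv : 0 < ‖v‖ := norm_pos_iff.mpr hv
  refine ⟨hv, ?_⟩
  rw [real_inner_smul_left, inv_mul_lt_iff₀ hnv]
  linarith

end InnerProduct

theorem subgradient_direction_inequality_general
    {H : Type*} [NormedAddCommGroup H] [InnerProductSpace ℝ H]
    (f : H → ℝ)
    (xb x : H) (Δ Lb : ℝ) (hΔ : 0 < Δ) (hL : 0 < Lb)
    (hlip : ∀ z₁ ∈ Metric.closedBall xb (Δ / (4 * Lb)),
            ∀ z₂ ∈ Metric.closedBall xb (Δ / (4 * Lb)),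
              |f z₁ - f z₂| ≤ Lb * ‖z₁ - z₂‖)
    (hx : f x > f xb + Δ)
    (v : H) (hv : ∀ z : H, f x + ⟪v, z - x⟫_ℝ ≤ f z) :
    v ≠ 0 ∧ ⟪‖v‖⁻¹ • v, xb - x⟫_ℝ < -(Δ / (4 * Lb)) := by
  set r := Δ / (4 * Lb)
  have hr : 0 ≤ r := by positivity
  have hbound : ∀ z ∈ Metric.closedBall xb r, f z - f xb ≤ Δ / 4 := fun z hz => calc
    f z - f xb ≤ |f z - f xb| := le_abs_self _
    _ ≤ Lb * ‖z - xb‖ := hlip z hz xb (Metric.mem_closedBall_self hr)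
    _ ≤ Lb * r := by gcongr; exact mem_closedBall_iff_norm.mp hz
    _ = Δ / 4 := by simp only [r]; field_simp
  obtain ⟨z, hz, hzv⟩ := exists_mem_closedBall_inner_eq hr xb v
  have hmax : ⟪v, xb - x⟫_ℝ + r * ‖v‖ ≤ f z - f x := by
    have hsub := hv z
    rw [inner_sub_right, hzv] at hsub
    rw [inner_sub_right]
    linarith
  exact ne_zero_and_inner_normalize_lt (by linarith [hbound z hz])

/-- Let `H` be a real Hilbert space, `f : H → ℝ` convex, `Δ > 0`, `Lb > 0`, and suppose
`f` is `Lb`-Lipschitz on the closed ball `B(xb, Δ/(4·Lb))` centered at `xb`. If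
`f x > f xb + Δ` and `v` is a subgradient of `f` at `x`, then `v ≠ 0` and
`⟪v/‖v‖, xb − x⟫ < −Δ/(4·Lb)`. -/
theorem subgradient_direction_inequality
    {H : Type*} [NormedAddCommGroup H] [InnerProductSpace ℝ H] [CompleteSpace H]
    (f : H → ℝ) (hf : ConvexOn ℝ Set.univ f)
    (xb x : H) (Δ Lb : ℝ) (hΔ : 0 < Δ) (hL : 0 < Lb)
    (hlip : ∀ z₁ ∈ Metric.closedBall xb (Δ / (4 * Lb)),
            ∀ z₂ ∈ Metric.closedBall xb (Δ / (4 * Lb)),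
              |f z₁ - f z₂| ≤ Lb * ‖z₁ - z₂‖)
    (hx : f x > f xb + Δ)
    (v : H) (hv : ∀ z : H, f x + ⟪v, z - x⟫_ℝ ≤ f z) :
    v ≠ 0 ∧ ⟪‖v‖⁻¹ • v, xb - x⟫_ℝ < -(Δ / (4 * Lb)) :=
  subgradient_direction_inequality_general f xb x Δ Lb hΔ hL hlip hx v hv
end

section
/- Let H be a real Hilbert space, let T : H → H be a nonexpansive operator, let f : H → ℝ be a convex function, and let M > 0, L̄ > 1 be such that Fix(T) ⊆ B(0,M) and f is L̄-Lipschitz on the closed ball B(0, 3M+2). Let x̄ be a point of Fix(T) minimizing f over Fix(T), let Δ ∈ (0,1], α > 0, and let x ∈ H satisfy ‖x‖ ≤ 3M+2 and f(x) > f(x̄) + Δ. Let v be a subgradient of f at x. Then v ≠ 0 and the point y := T(x − α v/‖v‖) satisfies ‖y − x̄‖² ≤ ‖x − x̄‖² − 2α(4L̄)⁻¹Δ + α². Moreover, d(y, SOL(f, Fix(T)))² ≤ d(x, SOL(f, Fix(T)))² − 2α(4L̄)⁻¹Δ + α². -/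
open scoped InnerProductSpace

/-- `SOLSet f F` is the set of minimizers of `f` over `F`. -/
def SOLSet {H : Type*} (f : H → ℝ) (F : Set H) : Set H :=
  {u ∈ F | ∀ y ∈ F, f u ≤ f y}

/-- Let `H` be a real Hilbert space, `T : H → H` nonexpansive, `f : H → ℝ` convex,
`M > 0`, `Lb > 1`, `Fix(T) ⊆ B(0,M)`, and `f` `Lb`-Lipschitz on `B(0, 3M+2)`. Let `xb`
minimize `f` over `Fix(T)`, let `Δ ∈ (0,1]`, `α > 0`, and let `x` satisfy `‖x‖ ≤ 3M+2`
and `f x > f xb + Δ`. If `v` is a subgradient of `f` at `x`, then `v ≠ 0` and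
`y := T (x − α·v/‖v‖)` satisfies
`‖y − xb‖² ≤ ‖x − xb‖² − 2α(4Lb)⁻¹Δ + α²`; moreover
`d(y, SOL(f, Fix T))² ≤ d(x, SOL(f, Fix T))² − 2α(4Lb)⁻¹Δ + α²`. -/
theorem subgradient_step_fejer_decrease
    {H : Type*} [NormedAddCommGroup H] [InnerProductSpace ℝ H] [CompleteSpace H]
    (T : H → H) (hT : ∀ x y : H, ‖T x - T y‖ ≤ ‖x - y‖)
    (f : H → ℝ) (hf : ConvexOn ℝ Set.univ f)
    (M Lb : ℝ) (hM : 0 < M) (hL : 1 < Lb)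
    (hFixB : {u : H | T u = u} ⊆ Metric.closedBall 0 M)
    (hlip : ∀ z₁ ∈ Metric.closedBall (0 : H) (3 * M + 2),
            ∀ z₂ ∈ Metric.closedBall (0 : H) (3 * M + 2),
              |f z₁ - f z₂| ≤ Lb * ‖z₁ - z₂‖)
    (xb : H) (hxbFix : T xb = xb) (hxbmin : ∀ y : H, T y = y → f xb ≤ f y)
    (Δ α : ℝ) (hΔ : Δ ∈ Set.Ioc (0 : ℝ) 1) (hα : 0 < α)
    (x : H) (hxnorm : ‖x‖ ≤ 3 * M + 2) (hxf : f x > f xb + Δ)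
    (v : H) (hv : ∀ z : H, f x + ⟪v, z - x⟫_ℝ ≤ f z) :
    v ≠ 0 ∧
    ‖T (x - α • (‖v‖⁻¹ • v)) - xb‖ ^ 2
      ≤ ‖x - xb‖ ^ 2 - 2 * α * (4 * Lb)⁻¹ * Δ + α ^ 2 ∧
    (Metric.infDist (T (x - α • (‖v‖⁻¹ • v))) (SOLSet f {u : H | T u = u})) ^ 2
      ≤ (Metric.infDist x (SOLSet f {u : H | T u = u})) ^ 2
        - 2 * α * (4 * Lb)⁻¹ * Δ + α ^ 2 := by
  obtain ⟨hΔ0, hΔ1⟩ := hΔ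
  have hLb0 : (0 : ℝ) < Lb := lt_trans one_pos hL
  have h4Lb : (0 : ℝ) < 4 * Lb := by linarith
  -- v ≠ 0
  have hv0 : v ≠ 0 := by
    intro h
    have := hv xb
    rw [h] at this
    simp at this
    linarith
  have hnv : (0 : ℝ) < ‖v‖ := norm_pos_iff.mpr hv0
  set g : H := ‖v‖⁻¹ • v with hg
  have hgnorm : ‖g‖ = 1 := by
    rw [hg, norm_smul, norm_inv, norm_norm, inv_mul_cancel₀ hnv.ne']
  -- key lemma for any fixed point u with f u ≤ f xb
  have key : ∀ u : H, T u = u → f u ≤ f xb →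
      ‖T (x - α • g) - u‖ ^ 2 ≤ ‖x - u‖ ^ 2 - 2 * α * (4 * Lb)⁻¹ * Δ + α ^ 2 := by
    intro u hu hfu
    have huM : ‖u‖ ≤ M := by
      have := hFixB (show u ∈ {u : H | T u = u} from hu)
      simpa using this
    have hfxu : f u + Δ < f x := by linarith
    -- first bound : Δ < ⟪v, x - u⟫
    have hA : Δ < ⟪v, x - u⟫_ℝ := by
      have h1 := hv u
      have h2 : ⟪v, u - x⟫_ℝ = -⟪v, x - u⟫_ℝ := by
        rw [show u - x = -(x - u) by abel, inner_neg_right]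
      rw [h2] at h1
      linarith
    -- second bound
    have hB : (2 * M + 2) * (‖v‖ - Lb) + Δ < ⟪v, x - u⟫_ℝ := by
      set z : H := u + ((2 * M + 2) * ‖v‖⁻¹) • v with hz
      have hzu : ‖z - u‖ = 2 * M + 2 := by
        rw [hz]
        simp only [add_sub_cancel_left]
        rw [norm_smul, norm_mul, norm_inv, norm_norm, Real.norm_eq_abs,
          abs_of_pos (by linarith : (0:ℝ) < 2 * M + 2)]
        field_simp
      have hzball : z ∈ Metric.closedBall (0 : H) (3 * M + 2) := by
        rw [Metric.mem_closedBall, dist_zero_right]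
        calc ‖z‖ ≤ ‖u‖ + ‖z - u‖ := by
              have := norm_add_le u (z - u); simpa using this
          _ ≤ M + (2 * M + 2) := by rw [hzu]; linarith
          _ ≤ 3 * M + 2 := by linarith
      have huball : u ∈ Metric.closedBall (0 : H) (3 * M + 2) := by
        rw [Metric.mem_closedBall, dist_zero_right]; linarith
      have hlipz := hlip z hzball u huball
      have hfz : f z - f u ≤ Lb * (2 * M + 2) := by
        have := abs_le.mp hlipz
        rw [hzu] at hlipz
        have := (abs_le.mp hlipz).2
        linarith
      have hsub := hv z
      have hinz : ⟪v, z - x⟫_ℝ = -⟪v, x - u⟫_ℝ + (2 * M + 2) * ‖v‖ := by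
        rw [hz, show u + ((2 * M + 2) * ‖v‖⁻¹) • v - x
            = -(x - u) + ((2 * M + 2) * ‖v‖⁻¹) • v by abel]
        rw [inner_add_right, inner_neg_right, real_inner_smul_right,
          real_inner_self_eq_norm_sq]
        field_simp
      rw [hinz] at hsub
      linarith
    -- combined: ‖v‖ * ((4Lb)⁻¹ * Δ) ≤ ⟪v, x - u⟫
    have hInner : ‖v‖ * ((4 * Lb)⁻¹ * Δ) ≤ ⟪v, x - u⟫_ℝ := by
      rcases le_or_gt ‖v‖ (4 * Lb) with hc | hc
      · have h1 : ‖v‖ * ((4 * Lb)⁻¹ * Δ) ≤ (4 * Lb) * ((4 * Lb)⁻¹ * Δ) :=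
          mul_le_mul_of_nonneg_right hc
            (mul_nonneg (inv_nonneg.mpr h4Lb.le) hΔ0.le)
        have h2 : (4 * Lb) * ((4 * Lb)⁻¹ * Δ) = Δ := by field_simp
        linarith
      · have h1 : ‖v‖ * ((4 * Lb)⁻¹ * Δ) ≤ (2 * M + 2) * (‖v‖ - Lb) + Δ := by
          rw [show ‖v‖ * ((4 * Lb)⁻¹ * Δ) = ‖v‖ * Δ / (4 * Lb) by ring,
            div_le_iff₀ h4Lb]
          nlinarith [mul_pos hM hnv, mul_pos hM hLb0, mul_pos hΔ0 hLb0,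
            mul_le_of_le_one_right hnv.le hΔ1]
        linarith
    -- Fejér step
    have hgin : (4 * Lb)⁻¹ * Δ ≤ ⟪x - u, g⟫_ℝ := by
      rw [hg, real_inner_smul_right, real_inner_comm]
      have := mul_le_mul_of_nonneg_left hInner (inv_nonneg.mpr hnv.le)
      rw [← mul_assoc, inv_mul_cancel₀ hnv.ne', one_mul] at this
      linarith
    have hstep : ‖T (x - α • g) - u‖ ≤ ‖(x - u) - α • g‖ := by
      calc ‖T (x - α • g) - u‖ = ‖T (x - α • g) - T u‖ := by rw [hu]
        _ ≤ ‖(x - α • g) - u‖ := hT _ _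
        _ = ‖(x - u) - α • g‖ := by rw [show x - α • g - u = (x - u) - α • g by abel]
    have hexp : ‖(x - u) - α • g‖ ^ 2
        = ‖x - u‖ ^ 2 - 2 * (α * ⟪x - u, g⟫_ℝ) + α ^ 2 := by
      rw [norm_sub_sq_real, real_inner_smul_right, norm_smul, Real.norm_eq_abs,
        abs_of_pos hα, mul_pow, hgnorm]
      ring
    have h1 : ‖T (x - α • g) - u‖ ^ 2 ≤ ‖(x - u) - α • g‖ ^ 2 :=
      pow_le_pow_left₀ (norm_nonneg _) hstep 2
    have h2 : α * ((4 * Lb)⁻¹ * Δ) ≤ α * ⟪x - u, g⟫_ℝ :=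
      mul_le_mul_of_nonneg_left hgin hα.le
    rw [hexp] at h1
    nlinarith
  refine ⟨hv0, key xb hxbFix le_rfl, ?_⟩
  -- infDist part
  set S : Set H := SOLSet f {u : H | T u = u} with hS
  have hSne : S.Nonempty := ⟨xb, hxbFix, fun y hy => hxbmin y hy⟩
  set y : H := T (x - α • g) with hy'
  set dx : ℝ := Metric.infDist x S with hdx
  have hdx0 : 0 ≤ dx := Metric.infDist_nonneg
  have hmain : ∀ ε > (0:ℝ),
      (Metric.infDist y S) ^ 2 ≤ (dx + ε) ^ 2 - 2 * α * (4 * Lb)⁻¹ * Δ + α ^ 2 := by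
    intro ε hε
    obtain ⟨u, huS, hud⟩ := (Metric.infDist_lt_iff hSne).mp
      (show Metric.infDist x S < dx + ε by rw [← hdx]; linarith)
    obtain ⟨huFix, humin⟩ := huS
    have hfu : f u ≤ f xb := humin xb hxbFix
    have hk := key u huFix hfu
    have hdy : Metric.infDist y S ≤ ‖y - u‖ := by
      rw [← dist_eq_norm]; exact Metric.infDist_le_dist_of_mem ⟨huFix, humin⟩
    have hdy2 : (Metric.infDist y S) ^ 2 ≤ ‖y - u‖ ^ 2 :=
      pow_le_pow_left₀ Metric.infDist_nonneg hdy 2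
    have hxu : ‖x - u‖ ≤ dx + ε := by rw [← dist_eq_norm]; linarith
    have hxu2 : ‖x - u‖ ^ 2 ≤ (dx + ε) ^ 2 :=
      pow_le_pow_left₀ (norm_nonneg _) hxu 2
    linarith
  have htend : Filter.Tendsto
      (fun ε : ℝ => (dx + ε) ^ 2 - 2 * α * (4 * Lb)⁻¹ * Δ + α ^ 2)
      (nhdsWithin 0 (Set.Ioi 0))
      (nhds (dx ^ 2 - 2 * α * (4 * Lb)⁻¹ * Δ + α ^ 2)) := by
    have hc : Continuous
        (fun ε : ℝ => (dx + ε) ^ 2 - 2 * α * (4 * Lb)⁻¹ * Δ + α ^ 2) := by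
      continuity
    have := hc.tendsto 0
    simp only [add_zero] at this
    exact this.mono_left nhdsWithin_le_nhds
  exact ge_of_tendsto htend
    (Filter.eventually_of_mem self_mem_nhdsWithin fun ε hε => hmain ε hε)
end
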